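/- Let G be a group, m ≥ 1, and u, h ∈ G. Set a = u h u^{-1} and assume u a u^{-1} = a^{-1} h a and ⟨h, a⟩_m = ⟨a, h⟩_m. Then u^m h u^{-m} = h and u^m a u^{-m} = a. -/
import Mathlib


namespace Stmt18

/-- `alt x y k` is the alternating product `x y x y ⋯` with `k` factors, starting with `x`. -/
def alt {G : Type*} [Monoid G] (x y : G) : ℕ → G
  | 0 => 1
  | k + 1 => x * alt y x k

lemma alt_succ {G : Type*} [Monoid G] (x y : G) (n : ℕ) :
    alt x y (n + 1) = x * alt y x n := rfl

lemma alt_two {G : Type*} [Monoid G] (x y : G) (n : ℕ) :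
    alt x y (n + 2) = x * y * alt x y n := by
  rw [alt_succ, alt_succ, mul_assoc]

lemma alt_tail {G : Type*} [Monoid G] (x y : G) :
    ∀ n, alt x y (n + 1) = alt x y n * (if Even n then x else y)
  | 0 => by simp [alt]
  | n + 1 => by
    rw [alt_succ x y (n + 1), alt_tail y x n, alt_succ x y n, mul_assoc]
    simp only [Nat.even_add_one, ite_not]

/-- The sequence of conjugates. -/
def F {G : Type*} [Group G] (h a : G) : ℕ → G
  | 0 => h
  | 1 => a
  | n + 2 => (F h a (n + 1))⁻¹ * F h a n * F h a (n + 1)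

lemma F_closed {G : Type*} [Group G] (h a : G) :
    ∀ n, F h a (n + 1) =
      if Even n then (alt h a n)⁻¹ * alt a h (n + 1)
      else (alt a h n)⁻¹ * alt h a (n + 1)
  | 0 => by simp [F, alt]
  | 1 => by
    have : F h a 2 = a⁻¹ * h * a := rfl
    simp [this, Nat.not_even_one, alt, mul_assoc]
  | n + 2 => by
    have h2 : F h a (n + 3) = (F h a (n + 2))⁻¹ * F h a (n + 1) * F h a (n + 2) := rfl
    rw [h2, F_closed h a (n + 1), F_closed h a n]
    rcases Nat.even_or_odd n with he | ho
    · have h1 : ¬ Even (n + 1) := by simp [Nat.even_add_one, he]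
      have h2' : Even (n + 2) := by simpa [Nat.even_add_one] using h1
      rw [if_pos he, if_neg h1, if_pos h2',
        alt_two a h (n + 1), alt_two h a n, alt_succ a h n]
      group
    · have hne : ¬ Even n := Nat.not_even_iff_odd.mpr ho
      have h1 : Even (n + 1) := by simp [Nat.even_add_one, hne]
      have h2' : ¬ Even (n + 2) := by simpa [Nat.even_add_one] using h1
      rw [if_neg hne, if_pos h1, if_neg h2',
        alt_two h a (n + 1), alt_two a h n, alt_succ h a n]
      group

theorem stmt_18 {G : Type*} [Group G] (m : ℕ) (hm : 1 ≤ m) (u h a : G)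
    (ha : a = u * h * u⁻¹) (hconj : u * a * u⁻¹ = a⁻¹ * h * a)
    (halt : alt h a m = alt a h m) :
    u ^ m * h * (u ^ m)⁻¹ = h ∧ u ^ m * a * (u ^ m)⁻¹ = a := by
  -- Step 1: u^k conjugation matches F
  have key : ∀ k : ℕ, u ^ k * h * (u ^ k)⁻¹ = F h a k ∧
      u ^ k * a * (u ^ k)⁻¹ = F h a (k + 1) := by
    intro k
    induction k with
    | zero => simp [F]
    | succ k ih =>
      have e1 : u ^ (k + 1) * h * (u ^ (k + 1))⁻¹
          = u ^ k * (u * h * u⁻¹) * (u ^ k)⁻¹ := by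
        rw [pow_succ]; group
      have e2 : u ^ (k + 1) * a * (u ^ (k + 1))⁻¹
          = u ^ k * (u * a * u⁻¹) * (u ^ k)⁻¹ := by
        rw [pow_succ]; group
      constructor
      · rw [e1, ← ha, ih.2]
      · rw [e2, hconj]
        have : u ^ k * (a⁻¹ * h * a) * (u ^ k)⁻¹
            = (u ^ k * a * (u ^ k)⁻¹)⁻¹ * (u ^ k * h * (u ^ k)⁻¹) *
              (u ^ k * a * (u ^ k)⁻¹) := by group
        rw [this, ih.1, ih.2]
        rfl
  -- Step 2: F m = h, using halt
  obtain ⟨n, rfl⟩ : ∃ n, m = n + 1 := ⟨m - 1, (Nat.succ_pred_eq_of_pos hm).symm⟩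
  have hF : F h a (n + 1) = h := by
    rw [F_closed]
    rcases Nat.even_or_odd n with he | ho
    · rw [if_pos he, ← halt, alt_tail h a n, if_pos he]
      group
    · have hne : ¬ Even n := Nat.not_even_iff_odd.mpr ho
      rw [if_neg hne, halt, alt_tail a h n, if_neg hne]
      group
  have first : u ^ (n + 1) * h * (u ^ (n + 1))⁻¹ = h := by
    rw [(key (n + 1)).1, hF]
  refine ⟨first, ?_⟩
  -- Step 3: the statement for a follows by conjugating by u
  have comm : u ^ (n + 1) * u = u * u ^ (n + 1) := by
    rw [← pow_succ, ← pow_succ']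
  calc u ^ (n + 1) * a * (u ^ (n + 1))⁻¹
      = u ^ (n + 1) * (u * h * u⁻¹) * (u ^ (n + 1))⁻¹ := by rw [← ha]
    _ = (u ^ (n + 1) * u) * h * (u ^ (n + 1) * u)⁻¹ := by group
    _ = (u * u ^ (n + 1)) * h * (u * u ^ (n + 1))⁻¹ := by rw [comm]
    _ = u * (u ^ (n + 1) * h * (u ^ (n + 1))⁻¹) * u⁻¹ := by group
    _ = u * h * u⁻¹ := by rw [first]
    _ = a := ha.symm
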